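/- arXiv:math/9201204 — 3 statements merged into one kernel-verified Lean document; each statement's English description precedes it below -/
import Mathlib

section
/- Let (u_i)_{i=1}^m be unit vectors in R^n and (c_i)_{i=1}^m positive reals with Σ c_i (u_i ⊗ u_i) = I_n, and let (α_i)_{i=1}^m be positive reals. Then the zonotope Z = Σ_{i=1}^m α_i [−u_i, u_i] (Minkowski sum of segments) has volume |Z| ≥ 2^n Π_{i=1}^m (α_i / c_i)^{c_i}. -/
/-!
Transport argument. With `g t = exp (-t²/2)`, `M = ∫ g` and `Φ x = ∫_{t ≤ x} g t ∈ [0, M]`, the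
map `Ψ y = ∑ i, α i (2 Φ ⟪u i, y⟫ / M - 1) • u i` sends `ℝⁿ` injectively into `Z` (each
coordinate is increasing and the `u i` span), so `|Z| ≥ ∫ |det DΨ|`, where
`DΨ y = ∑ i, c i r i • u i ⊗ u i` with `r i = 2 α i / (c i M) · g ⟪u i, y⟫`.
Ball's inequality `det (∑ c i r i • u i ⊗ u i) ≥ ∏ r i ^ c i` (symmetrised Cauchy–Binet makes
`∑ c i u i ⊗ u i = I` a probability distribution on maps `Fin n → ι` whose marginals are the
`c i`, and weighted AM–GM finishes), together with `∑ c i ⟪u i, y⟫² = ‖y‖²` and `∑ c i = n`,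
bounds the Jacobian below by `(2 / M)ⁿ ∏ (α i / c i) ^ c i · exp (-‖y‖²/2)`, whose integral is
`2ⁿ ∏ (α i / c i) ^ c i`.
-/

open MeasureTheory
open scoped RealInnerProductSpace

open Finset Matrix InnerProductSpace

namespace Matrix

variable {ι d : Type*} [Fintype d] [DecidableEq d]

theorem det_sum_smul_vecMulVec [Fintype ι] (v : ι → d → ℝ) (b : ι → ℝ) :
    (∑ i, b i • vecMulVec (v i) (v i)).det
      = ∑ f : d → ι, (∏ k, b (f k) * v (f k) k) * (of fun k => v (f k)).det := by
  have hrows : ∑ i, b i • vecMulVec (v i) (v i) = of fun k => ∑ i, (b i * v i k) • v i := by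
    ext k l
    simp [vecMulVec, sum_apply, mul_assoc]
  rw [hrows]
  exact (detRowAlternating (n := d) (R := ℝ)).toMultilinearMap.map_sum _ |>.trans
    (sum_congr rfl fun f _ => (MultilinearMap.map_smul_univ _ _ _))

/-- Symmetrised Cauchy–Binet. -/
theorem factorial_mul_det_sum_smul_vecMulVec [Fintype ι] (v : ι → d → ℝ) (b : ι → ℝ) :
    ((Fintype.card d).factorial : ℝ) * (∑ i, b i • vecMulVec (v i) (v i)).det
      = ∑ f : d → ι, (∏ k, b (f k)) * (of fun k => v (f k)).det ^ 2 := by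
  set W : (d → ι) → Matrix d d ℝ := fun f => of fun k => v (f k)
  have hperm (σ : Equiv.Perm d) : (∑ i, b i • vecMulVec (v i) (v i)).det
      = ∑ f : d → ι, (∏ k, b (f k)) * ((σ.sign * ∏ k, v (f (σ k)) k) * (W f).det) := by
    rw [det_sum_smul_vecMulVec, ← (Equiv.arrowCongr σ.symm (Equiv.refl ι)).sum_comp]
    refine sum_congr rfl fun f _ => ?_
    simp only [Equiv.arrowCongr_apply, Equiv.symm_symm, Equiv.coe_refl, Function.id_comp]
    rw [show (of fun k => v ((f ∘ σ) k)) = (W f).submatrix σ id from rfl, det_permute,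
      prod_mul_distrib,
      show ∏ k, b ((f ∘ σ) k) = ∏ k, b (f k) from Equiv.prod_comp σ (fun k => b (f k))]
    simp only [Function.comp_apply]
    ring
  calc ((Fintype.card d).factorial : ℝ) * (∑ i, b i • vecMulVec (v i) (v i)).det
      = ∑ σ : Equiv.Perm d, ∑ f : d → ι,
          (∏ k, b (f k)) * ((σ.sign * ∏ k, v (f (σ k)) k) * (W f).det) := by
        simp_rw [← hperm, sum_const, card_univ, Fintype.card_perm, nsmul_eq_mul]
    _ = ∑ f : d → ι, (∏ k, b (f k)) *
          ((∑ σ : Equiv.Perm d, σ.sign * ∏ k, v (f (σ k)) k) * (W f).det) := by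
        simp only [mul_sum, sum_mul]
        exact sum_comm
    _ = ∑ f : d → ι, (∏ k, b (f k)) * (W f).det ^ 2 := by
        refine sum_congr rfl fun f _ => ?_
        rw [show ∑ σ : Equiv.Perm d, (σ.sign : ℝ) * ∏ k, v (f (σ k)) k = (W f).det from
          (det_apply' (W f)).symm, sq]

noncomputable def cauchyBinetWeight (v : ι → d → ℝ) (c : ι → ℝ) (f : d → ι) : ℝ :=
  ((Fintype.card d).factorial : ℝ)⁻¹ * ((∏ k, c (f k)) * (of fun k => v (f k)).det ^ 2)

variable {v : ι → d → ℝ} {c : ι → ℝ}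

theorem cauchyBinetWeight_nonneg (hc : ∀ i, 0 ≤ c i) (f : d → ι) :
    0 ≤ cauchyBinetWeight v c f := by
  have := prod_nonneg fun k (_ : k ∈ univ) => hc (f k)
  unfold cauchyBinetWeight
  positivity

theorem cauchyBinetWeight_eq_zero_of_not_injective {f : d → ι} (hf : ¬ Function.Injective f) :
    cauchyBinetWeight v c f = 0 := by
  obtain ⟨k, l, hkl, hne⟩ := Function.not_injective_iff.mp hf
  have : (of fun k => v (f k)).det = 0 := det_zero_of_row_eq hne (congrArg v hkl)
  simp [cauchyBinetWeight, this]

variable [Fintype ι]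

theorem sum_cauchyBinetWeight_mul_prod (r : ι → ℝ) :
    ∑ f, cauchyBinetWeight v c f * ∏ k, r (f k)
      = (∑ i, (c i * r i) • vecMulVec (v i) (v i)).det := by
  have hfac : ((Fintype.card d).factorial : ℝ) ≠ 0 := by positivity
  rw [← mul_right_inj' hfac, factorial_mul_det_sum_smul_vecMulVec, mul_sum]
  refine sum_congr rfl fun f _ => ?_
  rw [cauchyBinetWeight, prod_mul_distrib]
  field_simp

theorem sum_cauchyBinetWeight (h : ∑ i, c i • vecMulVec (v i) (v i) = 1) :
    ∑ f, cauchyBinetWeight v c f = 1 := by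
  simpa [h] using sum_cauchyBinetWeight_mul_prod (v := v) (c := c) 1

theorem sum_cauchyBinetWeight_mul_card_fiber [DecidableEq ι] (hv : ∀ i, v i ⬝ᵥ v i = 1)
    (h : ∑ i, c i • vecMulVec (v i) (v i) = 1) (i : ι) :
    ∑ f, cauchyBinetWeight v c f * #{k | f k = i} = c i := by
  -- Doubling `c i` turns the determinant into `1 + c i`, and multiplies the weight of `f` by
  -- `2 ^ #{k | f k = i}`, which is `1 + #{k | f k = i}` on the support (injective `f`).
  have hdet := sum_cauchyBinetWeight_mul_prod (v := v) (c := c) fun j => if j = i then 2 else 1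
  have hmat : ∑ j, (c j * if j = i then 2 else 1) • vecMulVec (v j) (v j)
      = 1 + c i • vecMulVec (v i) (v i) := by
    have hsplit (j : ι) : (c j * if j = i then 2 else 1) • vecMulVec (v j) (v j)
        = c j • vecMulVec (v j) (v j) + if j = i then c j • vecMulVec (v j) (v j) else 0 := by
      split_ifs <;> module
    rw [sum_congr rfl fun j _ => hsplit j, sum_add_distrib, h, sum_ite_eq', if_pos (mem_univ i)]
  have hpow (f : d → ι) : cauchyBinetWeight v c f * ∏ k, (if f k = i then (2 : ℝ) else 1)
      = cauchyBinetWeight v c f * (1 + #{k | f k = i}) := by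
    by_cases hf : Function.Injective f
    · have hcard : #{k | f k = i} ≤ 1 :=
        card_le_one.mpr fun k hk l hl => hf ((mem_filter.mp hk).2.trans (mem_filter.mp hl).2.symm)
      rw [prod_ite, prod_const, prod_const_one, mul_one]
      interval_cases #{k | f k = i} <;> norm_num
    · simp [cauchyBinetWeight_eq_zero_of_not_injective hf]
  rw [hmat, ← smul_vecMulVec, vecMulVec_eq Unit, det_one_add_replicateCol_mul_replicateRow,
    dotProduct_smul, hv, smul_eq_mul, mul_one, sum_congr rfl fun f _ => hpow f] at hdet
  simp only [mul_add, mul_one, sum_add_distrib, sum_cauchyBinetWeight h] at hdet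
  linarith

theorem sum_cauchyBinetWeight_mul_sum_comp (hv : ∀ i, v i ⬝ᵥ v i = 1)
    (h : ∑ i, c i • vecMulVec (v i) (v i) = 1) (φ : ι → ℝ) :
    ∑ f, cauchyBinetWeight v c f * ∑ k, φ (f k) = ∑ i, c i * φ i := by
  classical
  have hfiber (f : d → ι) : ∑ k, φ (f k) = ∑ i, (#{k | f k = i} : ℝ) * φ i := by
    rw [← sum_fiberwise' univ f φ]
    simp_rw [sum_const, nsmul_eq_mul]
  simp_rw [hfiber, mul_sum, ← sum_cauchyBinetWeight_mul_card_fiber hv h, sum_mul]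
  rw [sum_comm]
  simp_rw [mul_assoc]

/-- Ball's determinant inequality. -/
theorem prod_rpow_le_det_sum_smul_vecMulVec (hv : ∀ i, v i ⬝ᵥ v i = 1) (hc : ∀ i, 0 ≤ c i)
    (h : ∑ i, c i • vecMulVec (v i) (v i) = 1) {r : ι → ℝ} (hr : ∀ i, 0 < r i) :
    ∏ i, r i ^ c i ≤ (∑ i, (c i * r i) • vecMulVec (v i) (v i)).det := by
  have hprod (f : d → ι) : 0 < ∏ k, r (f k) := prod_pos fun k _ => hr (f k)
  calc ∏ i, r i ^ c i = Real.exp (∑ i, c i * Real.log (r i)) := by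
        rw [Real.exp_sum]
        exact prod_congr rfl fun i _ => by rw [Real.rpow_def_of_pos (hr i), mul_comm]
    _ = Real.exp (∑ f, cauchyBinetWeight v c f * Real.log (∏ k, r (f k))) := by
        rw [← sum_cauchyBinetWeight_mul_sum_comp hv h]
        simp_rw [Real.log_prod fun k _ => (hr _).ne']
    _ = ∏ f, (∏ k, r (f k)) ^ cauchyBinetWeight v c f := by
        rw [Real.exp_sum]
        exact prod_congr rfl fun f _ => by rw [Real.rpow_def_of_pos (hprod f), mul_comm]
    _ ≤ ∑ f, cauchyBinetWeight v c f * ∏ k, r (f k) :=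
        Real.geom_mean_le_arith_mean_weighted _ _ _ (fun f _ => cauchyBinetWeight_nonneg hc f)
          (sum_cauchyBinetWeight h) fun f _ => (hprod f).le
    _ = _ := sum_cauchyBinetWeight_mul_prod r

end Matrix

theorem hasDerivAt_integral_Iic {g : ℝ → ℝ} (hg : Continuous g) (hgi : Integrable g) (x : ℝ) :
    HasDerivAt (fun x => ∫ t in Set.Iic x, g t) (g x) x := by
  have h : (fun x => ∫ t in Set.Iic x, g t)
      = fun x => (∫ t in Set.Iic 0, g t) + ∫ t in 0..x, g t := by
    funext x
    rw [← intervalIntegral.integral_Iic_sub_Iic hgi.integrableOn hgi.integrableOn]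
    ring
  rw [h]
  exact (hg.integral_hasStrictDerivAt 0 x).hasDerivAt.const_add _

theorem exists_abs_le_forall_hasDerivAt {g : ℝ → ℝ} (hg : Continuous g) (hgi : Integrable g)
    (hg0 : ∀ t, 0 ≤ g t) {a : ℝ} (ha : 0 ≤ a) :
    ∃ F : ℝ → ℝ, (∀ t, |F t| ≤ a) ∧ ∀ t, HasDerivAt F (2 * a / (∫ s, g s) * g t) t := by
  set M := ∫ s, g s
  set Φ : ℝ → ℝ := fun x => ∫ s in Set.Iic x, g s
  have hΦ0 (x : ℝ) : 0 ≤ Φ x / M :=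
    div_nonneg (setIntegral_nonneg measurableSet_Iic fun t _ => hg0 t) (integral_nonneg hg0)
  have hΦM (x : ℝ) : Φ x / M ≤ 1 :=
    div_le_one_of_le₀ (setIntegral_le_integral hgi (.of_forall hg0)) (integral_nonneg hg0)
  refine ⟨fun t => a * (2 * (Φ t / M) - 1), fun t => ?_, fun t => ?_⟩
  · rw [abs_mul, abs_of_nonneg ha]
    exact mul_le_of_le_one_right ha (abs_le.2 ⟨by linarith [hΦ0 t], by linarith [hΦM t]⟩)
  · refine ((((hasDerivAt_integral_Iic hg hgi t).div_const M).const_mul 2).sub_const 1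
      |>.const_mul a).congr_deriv ?_
    ring

theorem integral_exp_neg_mul_sq_norm {E : Type*} [NormedAddCommGroup E] [InnerProductSpace ℝ E]
    [FiniteDimensional ℝ E] [MeasurableSpace E] [BorelSpace E] {b : ℝ} (hb : 0 < b) :
    ∫ y : E, Real.exp (-b * ‖y‖ ^ 2) = (∫ t : ℝ, Real.exp (-b * t ^ 2)) ^ Module.finrank ℝ E := by
  rw [GaussianFourier.integral_rexp_neg_mul_sq_norm hb, integral_gaussian, Real.sqrt_eq_rpow,
    ← Real.rpow_natCast, ← Real.rpow_mul (by positivity)]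
  ring_nf

theorem StrictMono.sub_mul_sub_pos {F : ℝ → ℝ} (hF : StrictMono F) {a b : ℝ} (hab : a ≠ b) :
    0 < (F a - F b) * (a - b) := by
  rcases hab.lt_or_gt with h | h
  · exact mul_pos_of_neg_of_neg (sub_neg.mpr (hF h)) (sub_neg.mpr h)
  · exact mul_pos (sub_pos.mpr (hF h)) (sub_pos.mpr h)

section InnerProductSpace

variable {ι E : Type*} [Fintype ι] [NormedAddCommGroup E] [InnerProductSpace ℝ E]

def zonotope (α : ι → ℝ) (u : ι → E) : Set E :=
  {x | ∃ lam : ι → ℝ, (∀ i, |lam i| ≤ 1) ∧ x = ∑ i, (α i * lam i) • u i}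

theorem sum_smul_mem_zonotope {α a : ι → ℝ} (h : ∀ i, |a i| ≤ α i) (u : ι → E) :
    ∑ i, a i • u i ∈ zonotope α u := by
  refine ⟨fun i => a i / α i, fun i => ?_, sum_congr rfl fun i _ => ?_⟩
  · rw [abs_div]
    exact div_le_one_of_le₀ ((h i).trans (le_abs_self _)) (abs_nonneg _)
  · rcases eq_or_ne (α i) 0 with h0 | h0
    · have : a i = 0 := abs_nonpos_iff.mp (h0 ▸ h i)
      simp [this, h0]
    · rw [mul_div_cancel₀ _ h0]

theorem hasFDerivAt_sum_smul_comp_inner {F F' : ι → ℝ → ℝ}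
    (hF : ∀ i t, HasDerivAt (F i) (F' i t) t) (u : ι → E) (y : E) :
    HasFDerivAt (fun y => ∑ i, F i ⟪u i, y⟫ • u i)
      (∑ i, F' i ⟪u i, y⟫ • rankOne ℝ (u i) (u i)) y := by
  refine HasFDerivAt.fun_sum fun i _ => ?_
  convert ((hF i _).comp_hasFDerivAt y (innerSL ℝ (u i)).hasFDerivAt).smul_const (u i) using 1
  · rfl
  · ext v
    simp [smul_smul]

theorem injective_sum_smul_comp_inner {F : ι → ℝ → ℝ} (hF : ∀ i, StrictMono (F i)) {u : ι → E}
    (hu : ∀ x, (∀ i, ⟪u i, x⟫ = 0) → x = 0) :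
    Function.Injective fun y => ∑ i, F i ⟪u i, y⟫ • u i := by
  intro y z hyz
  set term : ι → ℝ := fun i => (F i ⟪u i, y⟫ - F i ⟪u i, z⟫) * (⟪u i, y⟫ - ⟪u i, z⟫)
  have hterm_nonneg (i : ι) : 0 ≤ term i := by
    rcases eq_or_ne ⟪u i, y⟫ ⟪u i, z⟫ with h | h
    · simp [term, h]
    · exact ((hF i).sub_mul_sub_pos h).le
  have hsum : ∑ i, term i = 0 := by
    have : ⟪(∑ i, F i ⟪u i, y⟫ • u i) - ∑ i, F i ⟪u i, z⟫ • u i, y - z⟫ = 0 := by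
      simp only at hyz
      rw [hyz, sub_self, inner_zero_left]
    rw [← this, ← sum_sub_distrib, sum_inner]
    refine sum_congr rfl fun i _ => ?_
    rw [← sub_smul, real_inner_smul_left, inner_sub_right]
  have hinner (i : ι) : ⟪u i, y - z⟫ = 0 := by
    by_contra h
    rw [inner_sub_right] at h
    exact ((hF i).sub_mul_sub_pos (sub_ne_zero.mp h)).ne'
      ((sum_eq_zero_iff_of_nonneg fun i _ => hterm_nonneg i).mp hsum i (mem_univ i))
  exact sub_eq_zero.mp (hu _ hinner)

theorem toMatrix_sum_smul_rankOne {d : Type*} [Fintype d] [DecidableEq d]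
    (b : OrthonormalBasis d ℝ E) (u : ι → E) (a : ι → ℝ) :
    LinearMap.toMatrix b.toBasis b.toBasis (∑ i, a i • rankOne ℝ (u i) (u i) : E →L[ℝ] E)
      = ∑ i, a i • vecMulVec (b.repr (u i)) (b.repr (u i)) := by
  have hrepr (x : E) : ⇑(b.toBasis.repr x) = b.repr x := funext (b.coe_toBasis_repr_apply x)
  simp [map_sum, map_smul, toMatrix_rankOne, hrepr]

variable {u : ι → E} {c : ι → ℝ}

theorem prod_exp_neg_mul_inner_sq_rpow (hid : ∑ i, c i • rankOne ℝ (u i) (u i) = 1) (b : ℝ)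
    (y : E) : ∏ i, Real.exp (-b * ⟪u i, y⟫ ^ 2) ^ c i = Real.exp (-b * ‖y‖ ^ 2) := by
  have hnorm : ∑ i, c i * ⟪u i, y⟫ ^ 2 = ‖y‖ ^ 2 := by
    have := congrArg (fun T : E →L[ℝ] E => ⟪T y, y⟫) hid
    simp only [FunLike.coe_sum, FunLike.coe_smul, Finset.sum_apply,
      Pi.smul_apply, rankOne_apply, sum_inner, real_inner_smul_left, one_apply_eq_self,
      real_inner_self_eq_norm_sq] at this
    rw [← this]
    exact sum_congr rfl fun i _ => by rw [real_inner_comm]; ring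
  rw [← hnorm, mul_sum, Real.exp_sum]
  exact prod_congr rfl fun i _ => by rw [← Real.exp_mul]; ring_nf

variable [FiniteDimensional ℝ E]

theorem prod_rpow_le_det_sum_smul_rankOne (hu : ∀ i, ‖u i‖ = 1) (hc : ∀ i, 0 ≤ c i)
    (hid : ∑ i, c i • rankOne ℝ (u i) (u i) = 1) {r : ι → ℝ} (hr : ∀ i, 0 < r i) :
    ∏ i, r i ^ c i ≤ (∑ i, (c i * r i) • rankOne ℝ (u i) (u i)).det := by
  set b := stdOrthonormalBasis ℝ E
  have hv (i : ι) : (b.repr (u i)).ofLp ⬝ᵥ (b.repr (u i)).ofLp = 1 := by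
    have h : ⟪b.repr (u i), b.repr (u i)⟫ = 1 := by
      rw [real_inner_self_eq_norm_sq, b.repr.norm_map, hu i, one_pow]
    rwa [EuclideanSpace.inner_eq_star_dotProduct, star_trivial] at h
  have hmat : ∑ i, c i • vecMulVec (b.repr (u i)) (b.repr (u i)) = 1 := by
    rw [← toMatrix_sum_smul_rankOne, hid]
    exact LinearMap.toMatrix_one _
  rw [ContinuousLinearMap.det, ← LinearMap.det_toMatrix b.toBasis, toMatrix_sum_smul_rankOne]
  exact prod_rpow_le_det_sum_smul_vecMulVec hv hc hmat hr

theorem sum_eq_finrank_of_sum_smul_rankOne_eq_one (hu : ∀ i, ‖u i‖ = 1)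
    (hid : ∑ i, c i • rankOne ℝ (u i) (u i) = 1) : ∑ i, c i = Module.finrank ℝ E := by
  have := congrArg (fun T : E →L[ℝ] E => LinearMap.trace ℝ E T) hid
  simpa [map_sum, trace_rankOne, real_inner_self_eq_norm_sq, hu] using this

variable [MeasurableSpace E] [BorelSpace E]

theorem lintegral_prod_mul_exp_neg_mul_inner_sq_rpow (hid : ∑ i, c i • rankOne ℝ (u i) (u i) = 1)
    {a : ι → ℝ} (ha : ∀ i, 0 ≤ a i) {b : ℝ} (hb : 0 < b) :
    ∫⁻ y, ENNReal.ofReal (∏ i, (a i * Real.exp (-b * ⟪u i, y⟫ ^ 2)) ^ c i)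
      = ENNReal.ofReal ((∏ i, a i ^ c i) * (∫ t, Real.exp (-b * t ^ 2)) ^ Module.finrank ℝ E) := by
  have hprod (y : E) : ∏ i, (a i * Real.exp (-b * ⟪u i, y⟫ ^ 2)) ^ c i
      = (∏ i, a i ^ c i) * Real.exp (-b * ‖y‖ ^ 2) := by
    rw [prod_congr rfl fun i _ => Real.mul_rpow (ha i) (Real.exp_pos _).le, prod_mul_distrib,
      prod_exp_neg_mul_inner_sq_rpow hid]
  have hgauss := integral_exp_neg_mul_sq_norm (E := E) hb
  have hint : Integrable fun y : E => Real.exp (-b * ‖y‖ ^ 2) :=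
    .of_integral_ne_zero (by rw [hgauss, integral_gaussian]; positivity)
  simp_rw [hprod]
  rw [← hgauss, ← integral_const_mul, ofReal_integral_eq_lintegral_ofReal (hint.const_mul _)
    (.of_forall fun y => mul_nonneg (prod_nonneg fun i _ => Real.rpow_nonneg (ha i) _)
      (Real.exp_pos _).le)]

theorem lintegral_prod_rpow_le_volume_zonotope (hu : ∀ i, ‖u i‖ = 1) (hc : ∀ i, 0 < c i)
    (hid : ∑ i, c i • rankOne ℝ (u i) (u i) = 1) {α : ι → ℝ} {F r : ι → ℝ → ℝ}
    (hF : ∀ i t, HasDerivAt (F i) (c i * r i t) t) (hr : ∀ i t, 0 < r i t)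
    (hFα : ∀ i t, |F i t| ≤ α i) :
    ∫⁻ y, ENNReal.ofReal (∏ i, r i ⟪u i, y⟫ ^ c i) ≤ volume (zonotope α u) := by
  have hsep (x : E) (hx : ∀ i, ⟪u i, x⟫ = 0) : x = 0 := by
    simpa [hx] using (congrArg (fun T : E →L[ℝ] E => T x) hid).symm
  have hinj := injective_sum_smul_comp_inner
    (fun i => strictMono_of_hasDerivAt_pos (hF i) fun t => mul_pos (hc i) (hr i t)) hsep
  have hvol := lintegral_abs_det_fderiv_eq_addHaar_image volume MeasurableSet.univ
    (fun y _ => (hasFDerivAt_sum_smul_comp_inner hF u y).hasFDerivWithinAt) hinj.injOn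
  calc ∫⁻ y, ENNReal.ofReal (∏ i, r i ⟪u i, y⟫ ^ c i)
      ≤ ∫⁻ y, ENNReal.ofReal |(∑ i, (c i * r i ⟪u i, y⟫) • rankOne ℝ (u i) (u i)).det| :=
        lintegral_mono fun y => ENNReal.ofReal_le_ofReal <|
          (prod_rpow_le_det_sum_smul_rankOne hu (fun i => (hc i).le) hid fun i => hr i _).trans
            (le_abs_self _)
    _ = volume (Set.range fun y => ∑ i, F i ⟪u i, y⟫ • u i) := by simpa using hvol
    _ ≤ volume (zonotope α u) := measure_mono <|
        Set.range_subset_iff.2 fun y => sum_smul_mem_zonotope (fun i => hFα i _) u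

theorem ofReal_le_volume_zonotope (hu : ∀ i, ‖u i‖ = 1) (hc : ∀ i, 0 < c i)
    (hid : ∑ i, c i • rankOne ℝ (u i) (u i) = 1) {α : ι → ℝ} (hα : ∀ i, 0 < α i) :
    ENNReal.ofReal (2 ^ Module.finrank ℝ E * ∏ i, (α i / c i) ^ c i)
      ≤ volume (zonotope α u) := by
  set g : ℝ → ℝ := fun t => Real.exp (-(1 / 2) * t ^ 2)
  set M := ∫ t, g t
  have hM : 0 < M := by
    simp only [M, g, integral_gaussian]
    positivity
  choose F hFα hF using fun i => exists_abs_le_forall_hasDerivAt (g := g) (by fun_prop)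
    (integrable_exp_neg_mul_sq (by norm_num)) (fun t => (Real.exp_pos _).le) (hα i).le
  set a : ι → ℝ := fun i => 2 / M * (α i / c i)
  have ha (i : ι) : 0 < a i := mul_pos (by positivity) (div_pos (hα i) (hc i))
  have hconst : (∏ i, a i ^ c i) * M ^ Module.finrank ℝ E
      = 2 ^ Module.finrank ℝ E * ∏ i, (α i / c i) ^ c i := by
    have h2M : 0 < 2 / M := by positivity
    rw [prod_congr rfl fun i _ => Real.mul_rpow h2M.le (div_pos (hα i) (hc i)).le,
      prod_mul_distrib, ← Real.rpow_sum_of_pos h2M,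
      sum_eq_finrank_of_sum_smul_rankOne_eq_one hu hid, Real.rpow_natCast, div_pow,
      mul_right_comm, div_mul_cancel₀ _ (pow_pos hM _).ne']
  calc ENNReal.ofReal (2 ^ Module.finrank ℝ E * ∏ i, (α i / c i) ^ c i)
      = ∫⁻ y, ENNReal.ofReal (∏ i, (a i * g ⟪u i, y⟫) ^ c i) := by
        rw [lintegral_prod_mul_exp_neg_mul_inner_sq_rpow hid (fun i => (ha i).le) (b := 1 / 2)
          (by norm_num), hconst]
    _ ≤ volume (zonotope α u) :=
        lintegral_prod_rpow_le_volume_zonotope (r := fun i t => a i * g t) hu hc hid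
          (fun i t => (hF i t).congr_deriv <| show 2 * α i / M * g t = c i * (a i * g t) by
            rw [show a i = 2 / M * (α i / c i) from rfl]
            field_simp [(hc i).ne'])
          (fun i t => mul_pos (ha i) (Real.exp_pos _)) hFα

end InnerProductSpace

/-- Lemma 4: if `(u i)` are unit vectors in `ℝⁿ`, `(c i)` positive reals with
`∑ i, c i • (u i ⊗ u i) = I`, and `(α i)` positive reals, then the zonotope
`Z = ∑ i, α i • [-u i, u i]` has volume at least `2 ^ n * ∏ (α i / c i) ^ (c i)`. -/
theorem stmt_4 (n m : ℕ) (u : Fin m → EuclideanSpace ℝ (Fin n)) (c α : Fin m → ℝ)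
    (hu : ∀ i, ‖u i‖ = 1) (hc : ∀ i, 0 < c i)
    (hid : ∀ x : EuclideanSpace ℝ (Fin n), ∑ i, c i • ⟪u i, x⟫ • u i = x)
    (hα : ∀ i, 0 < α i)
    (Z : Set (EuclideanSpace ℝ (Fin n)))
    (hZ : Z = {x : EuclideanSpace ℝ (Fin n) | ∃ lam : Fin m → ℝ,
      (∀ i, |lam i| ≤ 1) ∧ x = ∑ i, (α i * lam i) • u i}) :
    ENNReal.ofReal (2 ^ n * ∏ i, (α i / c i) ^ (c i)) ≤ volume Z := by
  have hid' : ∑ i, c i • rankOne ℝ (u i) (u i) = 1 := by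
    ext1 x
    simpa using hid x
  simpa [hZ, zonotope] using ofReal_le_volume_zonotope hu hc hid' hα
end

section
/- (Loomis–Whitney) Let C be a convex body in R^n and e_1,...,e_n the standard orthonormal basis, with P_i the orthogonal projection onto e_i^⊥. Then |C|^{n−1} ≤ Π_{i=1}^n |P_i C|. -/
/-!
For functions `f i` on a product space that do not depend on the `i`-th coordinate, Finner's
inequality `∫ ∏ᵢ (f i)^(1/(n-1)) ≤ ∏ᵢ (∫ f i)^(1/(n-1))` (each `f i` integrated over the other
`n - 1` coordinates) is proved by integrating out one coordinate `j` at a time: the factor `f j`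
does not depend on `x j` and comes out of the integral, and Hölder's inequality with `n - 1`
exponents `1/(n-1)` handles the remaining factors. Applied to the indicators of the coordinate
projections of `K`, whose product dominates the indicator of `K`, this gives Loomis–Whitney for
products of measures. In Euclidean space, deleting the `i`-th coordinate of `P i x` is the same as
deleting it from `x`, and deleting coordinates is `1`-Lipschitz, so it does not increase
`(n-1)`-dimensional Hausdorff measure, which on `ℝⁿ⁻¹` is Lebesgue measure.
-/

open MeasureTheory
open scoped RealInnerProductSpace BigOperators

open Finset Function
open scoped ENNReal

section Finner

variable {ι : Type*} [DecidableEq ι] {A : ι → Type*} [∀ i, MeasurableSpace (A i)]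
  (μ : ∀ i, Measure (A i)) [∀ i, SigmaFinite (μ i)]

theorem lmarginal_update_of_update_eq {i : ι} {s : Finset ι} {f : (∀ i, A i) → ℝ≥0∞}
    (hf : Measurable f) (hfi : ∀ x t, f (update x i t) = f x) (hi : i ∉ s)
    (x : ∀ i, A i) (t : A i) :
    (∫⋯∫⁻_s, f ∂μ) (update x i t) = (∫⋯∫⁻_s, f ∂μ) x := by
  rw [lmarginal_update_of_notMem hf hi]
  exact congrArg (fun g => (∫⋯∫⁻_s, g ∂μ) x) (funext fun y => hfi y t)

theorem lmarginal_prod_rpow_le_prod_lmarginal [Fintype ι] {p : ℝ} (hp₀ : 0 ≤ p)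
    (hp : ((Fintype.card ι - 1 : ℕ) : ℝ) * p = 1)
    {f : ι → (∀ i, A i) → ℝ≥0∞} (hf : ∀ i, Measurable (f i))
    (hfi : ∀ i x t, f i (update x i t) = f i x) (s : Finset ι) (x : ∀ i, A i) :
    (∫⋯∫⁻_s, (fun y => ∏ i, f i y ^ p) ∂μ) x ≤ ∏ i, (∫⋯∫⁻_(s.erase i), f i ∂μ) x ^ p := by
  induction s using Finset.induction generalizing x with
  | empty => simp
  | @insert j s hj ih =>
    set F : ι → A j → ℝ≥0∞ := fun i t => (∫⋯∫⁻_(s.erase i), f i ∂μ) (update x j t)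
    have hF : ∀ i, Measurable (F i) := fun i =>
      ((hf i).lmarginal μ).comp (measurable_update x)
    have hHolder : ∫⁻ t, ∏ i ∈ univ.erase j, F i t ^ p ∂μ j
        ≤ ∏ i ∈ univ.erase j, (∫⁻ t, F i t ∂μ j) ^ p := by
      refine ENNReal.lintegral_prod_norm_pow_le _ (fun i _ => (hF i).aemeasurable) ?_
        (fun _ _ => hp₀)
      rwa [sum_const, card_erase_of_mem (mem_univ j), card_univ, nsmul_eq_mul]
    have hFj : ∀ t, F j t = (∫⋯∫⁻_s, f j ∂μ) x := fun t => by
      simp only [F, erase_eq_of_notMem hj]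
      exact lmarginal_update_of_update_eq μ (hf j) (hfi j) hj x t
    calc (∫⋯∫⁻_insert j s, (fun y => ∏ i, f i y ^ p) ∂μ) x
        = ∫⁻ t, (∫⋯∫⁻_s, (fun y => ∏ i, f i y ^ p) ∂μ) (update x j t) ∂μ j :=
          lmarginal_insert _ (by fun_prop) hj x
      _ ≤ ∫⁻ t, ∏ i, F i t ^ p ∂μ j := lintegral_mono fun t => ih (update x j t)
      _ = (∫⋯∫⁻_s, f j ∂μ) x ^ p * ∫⁻ t, ∏ i ∈ univ.erase j, F i t ^ p ∂μ j := by
          simp_rw [← mul_prod_erase univ _ (mem_univ j), hFj]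
          exact lintegral_const_mul _ (by fun_prop)
      _ ≤ (∫⋯∫⁻_s, f j ∂μ) x ^ p * ∏ i ∈ univ.erase j, (∫⁻ t, F i t ∂μ j) ^ p := by
          gcongr
      _ = ∏ i, (∫⋯∫⁻_((insert j s).erase i), f i ∂μ) x ^ p := by
          rw [← mul_prod_erase univ _ (mem_univ j), erase_insert hj]
          refine congrArg _ (prod_congr rfl fun i hi => ?_)
          have hij : j ≠ i := (ne_of_mem_erase hi).symm
          rw [erase_insert_of_ne hij,
            lmarginal_insert _ (hf i) (fun h => hj (mem_of_mem_erase h))]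

theorem pi_pow_le_prod_pi_restrict_image [Fintype ι] (hι : 2 ≤ Fintype.card ι)
    {K : Set (∀ i, A i)} (hK : MeasurableSet K)
    (hKi : ∀ i, MeasurableSet ((univ.erase i).restrict '' K)) :
    Measure.pi μ K ^ (Fintype.card ι - 1) ≤
      ∏ i, Measure.pi (fun j : ↥(univ.erase i) => μ j) ((univ.erase i).restrict '' K) := by
  rcases K.eq_empty_or_nonempty with rfl | ⟨x₀, -⟩
  · simp [zero_pow (by omega : Fintype.card ι - 1 ≠ 0)]
  set p : ℝ := ((Fintype.card ι - 1 : ℕ) : ℝ)⁻¹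
  have hp : ((Fintype.card ι - 1 : ℕ) : ℝ) * p = 1 :=
    mul_inv_cancel₀ (by norm_cast; omega)
  set f : ι → (∀ i, A i) → ℝ≥0∞ :=
    fun i => ((univ.erase i).restrict '' K).indicator 1 ∘ (univ.erase i).restrict
  have hf : ∀ i, Measurable (f i) := fun i =>
    (measurable_const.indicator (hKi i)).comp (Finset.measurable_restrict _)
  have hfi : ∀ i x t, f i (update x i t) = f i x := fun i x t => by
    have : (univ.erase i).restrict (update x i t) = (univ.erase i).restrict x :=
      funext fun j => update_of_ne (ne_of_mem_erase j.2) t x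
    simp only [f, comp_apply, this]
  have hK_le : K.indicator 1 ≤ fun y => ∏ i, f i y ^ p := fun y => by
    by_cases hy : y ∈ K
    · simp [f, hy, Set.indicator_of_mem (Set.mem_image_of_mem _ hy)]
    · simp [hy]
  have hf_lmarginal : ∀ i, (∫⋯∫⁻_(univ.erase i), f i ∂μ) x₀ =
      Measure.pi (fun j : ↥(univ.erase i) => μ j) ((univ.erase i).restrict '' K) := fun i => by
    simp only [lmarginal, f, comp_apply, restrict_updateFinset]
    exact lintegral_indicator_one (hKi i)
  calc Measure.pi μ K ^ (Fintype.card ι - 1)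
      ≤ (∫⁻ y, ∏ i, f i y ^ p ∂Measure.pi μ) ^ (Fintype.card ι - 1) := by
        rw [← lintegral_indicator_one hK]
        gcongr
        exact hK_le _
    _ ≤ (∏ i, (∫⋯∫⁻_(univ.erase i), f i ∂μ) x₀ ^ p) ^ (Fintype.card ι - 1) := by
        rw [lintegral_eq_lmarginal_univ x₀]
        gcongr
        exact lmarginal_prod_rpow_le_prod_lmarginal μ (by positivity) hp hf hfi univ x₀
    _ = ∏ i, Measure.pi (fun j : ↥(univ.erase i) => μ j) ((univ.erase i).restrict '' K) := by
        rw [← prod_pow]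
        refine prod_congr rfl fun i _ => ?_
        rw [hf_lmarginal, ← ENNReal.rpow_natCast, ← ENNReal.rpow_mul,
          inv_mul_cancel₀ (by norm_cast; omega), ENNReal.rpow_one]

end Finner

namespace EuclideanSpace

variable {ι : Type*} [Fintype ι]

theorem volume_restrict_image_le_hausdorffMeasure (s : Finset ι)
    (S : Set (EuclideanSpace ℝ ι)) :
    volume (s.restrict '' (WithLp.ofLp '' S)) ≤ μH[s.card] S := by
  have hLip : LipschitzWith 1 (s.restrict ∘ WithLp.ofLp (p := 2) (V := ι → ℝ)) := by
    have hs : LipschitzWith 1 (s.restrict (π := fun _ => ℝ)) := LipschitzWith.of_edist_le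
      fun x y => edist_pi_le_iff.2 fun j => edist_le_pi_edist x y j
    simpa using hs.comp (PiLp.lipschitzWith_ofLp 2 _)
  calc volume (s.restrict '' (WithLp.ofLp '' S))
        = μH[s.card] ((s.restrict ∘ WithLp.ofLp) '' S) := by
        rw [← hausdorffMeasure_pi_real, Fintype.card_coe, Set.image_comp]
    _ ≤ μH[s.card] S := by
        simpa using hLip.hausdorffMeasure_image_le (Nat.cast_nonneg _) S

variable [DecidableEq ι]

theorem restrict_erase_sub_inner_single_smul (i : ι) (x : EuclideanSpace ℝ ι) :
    (univ.erase i).restrict (x - ⟪single i (1 : ℝ), x⟫ • single i (1 : ℝ)).ofLp =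
      (univ.erase i).restrict x.ofLp := by
  ext j
  simp [ne_of_mem_erase j.2]

end EuclideanSpace

theorem stmt_9_general (n : ℕ) (C : Set (EuclideanSpace ℝ (Fin n)))
    (hCc : IsCompact C) (hCi : (interior C).Nonempty) :
    volume C ^ (n - 1) ≤
      ∏ i : Fin n, μH[(n : ℝ) - 1]
        ((fun x => x - ⟪EuclideanSpace.single i (1 : ℝ), x⟫ •
          EuclideanSpace.single i (1 : ℝ)) '' C) := by
  obtain ⟨x₀, hx₀⟩ := hCi
  rcases Nat.lt_or_ge n 2 with hn | hn
  · interval_cases n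
    · simp
    · simpa using Measure.one_le_hausdorffMeasure_zero_of_nonempty
        ⟨_, Set.mem_image_of_mem _ (interior_subset hx₀)⟩
  set K : Set (Fin n → ℝ) := WithLp.ofLp '' C with hK_def
  have hK : IsCompact K := hCc.image (PiLp.continuous_ofLp 2 _)
  have hvol : volume K = volume C := by
    rw [hK_def, Set.image_eq_preimage_of_inverse (WithLp.toLp_ofLp 2) (WithLp.ofLp_toLp 2)]
    exact (PiLp.volume_preserving_toLp _).measure_preimage hCc.measurableSet.nullMeasurableSet
  have hproj : ∀ i, volume ((univ.erase i).restrict '' K) ≤ μH[(n : ℝ) - 1]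
      ((fun x => x - ⟪EuclideanSpace.single i (1 : ℝ), x⟫ •
        EuclideanSpace.single i (1 : ℝ)) '' C) := fun i => by
    have h := EuclideanSpace.volume_restrict_image_le_hausdorffMeasure (univ.erase i)
      ((fun x => x - ⟪EuclideanSpace.single i (1 : ℝ), x⟫ •
        EuclideanSpace.single i (1 : ℝ)) '' C)
    simp only [Set.image_image, EuclideanSpace.restrict_erase_sub_inner_single_smul] at h
    simpa [K, Set.image_image, Nat.cast_sub (by omega : 1 ≤ n)] using h
  calc volume C ^ (n - 1) = volume K ^ (n - 1) := by rw [hvol]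
    _ ≤ ∏ i, volume ((univ.erase i).restrict '' K) := by
        simpa only [← volume_pi, Fintype.card_fin] using
          pi_pow_le_prod_pi_restrict_image (fun _ => volume) (by simpa using hn)
            hK.measurableSet fun i => (hK.image (continuous_restrict _)).measurableSet
    _ ≤ _ := prod_le_prod' fun i _ => hproj i

/-- Loomis–Whitney: for a convex body `C` in `ℝⁿ` and `P i` the orthogonal projection
onto the hyperplane orthogonal to the `i`-th standard basis vector,
`|C|^(n-1) ≤ ∏ i, |P i C|`. -/
theorem stmt_9 (n : ℕ) (C : Set (EuclideanSpace ℝ (Fin n)))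
    (hC : Convex ℝ C) (hCc : IsCompact C) (hCi : (interior C).Nonempty) :
    volume C ^ (n - 1) ≤
      ∏ i : Fin n, μH[(n : ℝ) - 1]
        ((fun x => x - ⟪EuclideanSpace.single i (1 : ℝ), x⟫ •
          EuclideanSpace.single i (1 : ℝ)) '' C) :=
  stmt_9_general n C hCc hCi
end

section
/- (Petty's intertwining) If C is a convex body in R^n, T a linear operator on R^n with det T = 1, and Π*(C) denotes the unit ball of the norm θ ↦ |P_θ C| (extended by homogeneity to a norm via the support-function representation), then Π*(TC) = T(Π*(C)). -/
open MeasureTheory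
open scoped RealInnerProductSpace

/-- The positively homogeneous extension of the shadow function `θ ↦ |P_θ C|`:
for `x ≠ 0` its value is `‖x‖ * |P_{x/‖x‖} C|`, and it vanishes at `0`. -/
noncomputable def shadowNorm (n : ℕ) (C : Set (EuclideanSpace ℝ (Fin n)))
    (x : EuclideanSpace ℝ (Fin n)) : ℝ :=
  ‖x‖ * (μH[(n : ℝ) - 1]
    ((fun y => y - ⟪‖x‖⁻¹ • x, y⟫ • (‖x‖⁻¹ • x)) '' C)).toReal

/-- `Π*(C)`, the unit ball of the (extended) shadow norm of `C`; equivalently the polar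
of the projection body of `C`. -/
noncomputable def piStar (n : ℕ) (C : Set (EuclideanSpace ℝ (Fin n))) :
    Set (EuclideanSpace ℝ (Fin n)) :=
  {x | shadowNorm n C x ≤ 1}

/-!
For a convex body `C` and a vector `x = r θ` with `‖θ‖ = 1`, the Minkowski sum `C + [0, x]` is
`C` with a prism of height `r` over the shadow `P_θ C` attached: by Fubini along `θ`, every
nonempty fibre of `C` is an interval, which gets longer by exactly `r`. Hence
`vol (C + [0, x]) = vol C + ‖x‖ |P_θ C|`, so the shadow norm is a function of the volumes of
`C` and `C + [0, x]`. A linear map with `det T = 1` preserves volume and maps `C + [0, x]` onto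
`T C + [0, T x]`, so `shadowNorm (T C) (T x) = shadowNorm C x`.
-/

open Set Module
open scoped Pointwise ENNReal

theorem Set.Icc_add_Icc_zero {a b r : ℝ} (hab : a ≤ b) (hr : 0 ≤ r) :
    Icc a b + Icc 0 r = Icc a (b + r) := by
  refine (Icc_add_Icc_subset a b 0 r).trans_eq (by rw [add_zero]) |>.antisymm fun x hx => ?_
  rcases le_total x b with hxb | hbx
  · exact ⟨x, ⟨hx.1, hxb⟩, 0, ⟨le_rfl, hr⟩, add_zero x⟩
  · exact ⟨b, ⟨hab, le_rfl⟩, x - b, ⟨by linarith, by linarith [hx.2]⟩, by ring⟩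

theorem Convex.volume_add_Icc {A : Set ℝ} (hA : Convex ℝ A) (hAc : IsCompact A)
    (hne : A.Nonempty) {r : ℝ} (hr : 0 ≤ r) :
    volume (A + Icc 0 r) = volume A + ENNReal.ofReal r := by
  have hA_eq := eq_Icc_of_connected_compact ⟨hne, hA.isPreconnected⟩ hAc
  have hle : sInf A ≤ sSup A := csInf_le_csSup hne hAc.bddBelow hAc.bddAbove
  rw [hA_eq, Icc_add_Icc_zero hle hr, Real.volume_Icc, Real.volume_Icc,
    ← ENNReal.ofReal_add (sub_nonneg.2 hle) hr, add_sub_right_comm]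

theorem preimage_prodMk_add_Icc_prod_zero {F : Type*} [AddZeroClass F] (K : Set (ℝ × F))
    (r : ℝ) (y : F) :
    (fun t => (t, y)) ⁻¹' (K + Icc 0 r ×ˢ {0}) = (fun t => (t, y)) ⁻¹' K + Icc 0 r := by
  ext t
  constructor
  · rintro ⟨p, hp, q, ⟨hq, hq0⟩, hpq⟩
    rw [mem_singleton_iff] at hq0
    obtain ⟨hp1, hp2⟩ := Prod.ext_iff.1 hpq
    simp only [Prod.fst_add, Prod.snd_add, hq0, add_zero] at hp1 hp2
    exact ⟨p.1, by rwa [mem_preimage, ← hp2], q.1, hq, hp1⟩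
  · rintro ⟨s, hs, q, hq, rfl⟩
    exact ⟨(s, y), hs, (q, 0), ⟨hq, rfl⟩, by simp⟩

theorem Convex.preimage_prodMk {F : Type*} [AddCommMonoid F] [Module ℝ F] {K : Set (ℝ × F)}
    (hK : Convex ℝ K) (y : F) : Convex ℝ ((fun t => (t, y)) ⁻¹' K) := by
  intro s hs t ht a b ha hb hab
  convert hK hs ht ha hb hab using 1
  simp [← add_smul, hab]

theorem IsCompact.preimage_prodMk {F : Type*} [TopologicalSpace F] [T2Space F]
    {K : Set (ℝ × F)} (hK : IsCompact K) (y : F) : IsCompact ((fun t => (t, y)) ⁻¹' K) :=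
  (hK.image continuous_fst).of_isClosed_subset (hK.isClosed.preimage (by fun_prop))
    fun t ht => ⟨(t, y), ht, rfl⟩

theorem Convex.volume_prod_add_Icc_prod_zero {F : Type*} [NormedAddCommGroup F] [NormedSpace ℝ F]
    [MeasurableSpace F] [BorelSpace F] [SecondCountableTopology F] (μ : Measure F) [SFinite μ]
    {K : Set (ℝ × F)} (hK : Convex ℝ K) (hKc : IsCompact K) {r : ℝ} (hr : 0 ≤ r) :
    (volume.prod μ) (K + Icc 0 r ×ˢ {0})
      = volume.prod μ K + ENNReal.ofReal r * μ (Prod.snd '' K) := by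
  have hfiber (y : F) : volume ((fun t => (t, y)) ⁻¹' (K + Icc 0 r ×ˢ {0})) =
      volume ((fun t => (t, y)) ⁻¹' K) + (Prod.snd '' K).indicator (fun _ => .ofReal r) y := by
    rw [preimage_prodMk_add_Icc_prod_zero]
    by_cases hy : y ∈ Prod.snd '' K
    · obtain ⟨p, hp, rfl⟩ := hy
      rw [(hK.preimage_prodMk _).volume_add_Icc (hKc.preimage_prodMk _) ⟨p.1, hp⟩ hr,
        indicator_of_mem (mem_image_of_mem _ hp)]
    · have hempty : (fun t => (t, y)) ⁻¹' K = ∅ :=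
        eq_empty_of_forall_notMem fun t ht => hy ⟨(t, y), ht, rfl⟩
      simp [hempty, indicator_of_notMem hy]
  rw [Measure.prod_apply_symm (hKc.add (isCompact_Icc.prod isCompact_singleton)).measurableSet,
    Measure.prod_apply_symm hKc.measurableSet, lintegral_congr hfiber,
    lintegral_add_left (measurable_measure_prodMk_right hKc.measurableSet),
    lintegral_indicator_const (hKc.image continuous_snd).measurableSet]

section UnitSplit

variable {V : Type*} [NormedAddCommGroup V] [InnerProductSpace ℝ V]

/-- The coordinates `z ↦ (⟪θ, z⟫, P_θ z)` along a unit vector `θ` and its orthogonal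
hyperplane. -/
noncomputable def unitSplit (θ : V) (hθ : ‖θ‖ = 1) : V ≃ₗ[ℝ] ℝ × (ℝ ∙ θ)ᗮ :=
  (ℝ ∙ θ).orthogonalDecomposition.toLinearEquiv ≪≫ₗ WithLp.linearEquiv 2 ℝ _ ≪≫ₗ
    (LinearIsometryEquiv.toSpanUnitSingleton θ hθ).symm.toLinearEquiv.prodCongr
      (LinearEquiv.refl ℝ _)

theorem unitSplit_self (θ : V) (hθ : ‖θ‖ = 1) : unitSplit θ hθ θ = (1, 0) := by
  simp [unitSplit, LinearIsometryEquiv.symm_apply_eq, Subtype.ext_iff,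
    Submodule.starProjection_eq_self_iff.2 (Submodule.mem_span_singleton_self θ),
    Submodule.orthogonalProjectionOnto_orthogonal_apply_eq_zero
      (Submodule.mem_span_singleton_self θ)]

theorem coe_unitSplit_snd (θ : V) (hθ : ‖θ‖ = 1) (z : V) :
    ((unitSplit θ hθ z).2 : V) = z - ⟪θ, z⟫ • θ := by
  simp [unitSplit, Submodule.starProjection_unit_singleton ℝ hθ]

theorem finrank_orthogonal_span_unit [FiniteDimensional ℝ V] {θ : V} (hθ : ‖θ‖ = 1) :
    finrank ℝ (ℝ ∙ θ)ᗮ = finrank ℝ V - 1 := by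
  have := (ℝ ∙ θ).finrank_add_finrank_orthogonal
  rw [finrank_span_singleton (norm_ne_zero_iff.1 (hθ ▸ one_ne_zero))] at this
  omega

variable [FiniteDimensional ℝ V] [MeasurableSpace V] [BorelSpace V]

theorem measurePreserving_unitSplit (θ : V) (hθ : ‖θ‖ = 1) :
    MeasurePreserving (unitSplit θ hθ) :=
  ((LinearIsometryEquiv.toSpanUnitSingleton θ hθ).symm.measurePreserving.prod
    (MeasurePreserving.id volume)).comp <| (WithLp.volume_preserving_ofLp _ _).comp
      (ℝ ∙ θ).orthogonalDecomposition.measurePreserving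

theorem volume_image_unitSplit (θ : V) (hθ : ‖θ‖ = 1) (S : Set V) :
    volume (unitSplit θ hθ '' S) = volume S := by
  rw [← (measurePreserving_unitSplit θ hθ).measure_preimage_emb
      (unitSplit θ hθ).toContinuousLinearEquiv.toHomeomorph.measurableEmbedding,
    (unitSplit θ hθ).injective.preimage_image]

theorem Convex.volume_add_segment_smul {C : Set V} (hC : Convex ℝ C) (hCc : IsCompact C)
    {θ : V} (hθ : ‖θ‖ = 1) {r : ℝ} (hr : 0 ≤ r) :
    volume (C + segment ℝ 0 (r • θ)) =
      volume C +
        ENNReal.ofReal r * μHE[finrank ℝ V - 1] ((fun y => y - ⟪θ, y⟫ • θ) '' C) := by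
  set Ψ := unitSplit θ hθ
  have hseg : Ψ '' segment ℝ 0 (r • θ) = Icc 0 r ×ˢ {0} := by
    refine (image_segment ℝ Ψ.toLinearMap.toAffineMap 0 (r • θ)).trans ?_
    rw [prod_singleton, ← segment_eq_Icc hr, Prod.image_mk_segment_left]
    simp [Ψ, unitSplit_self, Prod.zero_eq_mk]
  have hΨC : Convex ℝ (Ψ '' C) := hC.linear_image Ψ.toLinearMap
  have hΨCc : IsCompact (Ψ '' C) := hCc.image Ψ.toContinuousLinearEquiv.continuous
  have hshadow :
      Subtype.val '' (Prod.snd '' (Ψ '' C)) = (fun y => y - ⟪θ, y⟫ • θ) '' C := by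
    simp only [image_image, Ψ, coe_unitSplit_snd]
  calc volume (C + segment ℝ 0 (r • θ))
      = (volume.prod volume) (Ψ '' C + Icc 0 r ×ˢ {0}) := by
        rw [← volume_image_unitSplit θ hθ, image_add, hseg, Measure.volume_eq_prod]
    _ = volume C + ENNReal.ofReal r * volume (Prod.snd '' (Ψ '' C)) := by
        rw [hΨC.volume_prod_add_Icc_prod_zero volume hΨCc hr, ← Measure.volume_eq_prod,
          volume_image_unitSplit]
    _ = _ := by
        rw [← hshadow, isometry_subtype_coe.euclideanHausdorffMeasure_image,
          ← finrank_orthogonal_span_unit hθ,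
          InnerProductSpace.euclideanHausdorffMeasure_eq_volume]

end UnitSplit

/-- `μH` is the unnormalised Hausdorff measure; the factor turns it into `μHE`, which is
Lebesgue measure on hyperplanes. -/
theorem shadowNorm_eq_toReal_volume_add_segment {n : ℕ} {C : Set (EuclideanSpace ℝ (Fin n))}
    (hC : Convex ℝ C) (hCc : IsCompact C) (x : EuclideanSpace ℝ (Fin n)) :
    shadowNorm n C x = (volume (C + segment ℝ 0 x) - volume C).toReal /
      Measure.addHaarScalarFactor (volume : Measure (EuclideanSpace ℝ (Fin (n - 1))))
        μH[(n - 1 : ℕ)] := by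
  rcases eq_or_ne x 0 with rfl | hx
  · simp [shadowNorm]
  have hn : 1 ≤ n := by
    by_contra! h
    obtain rfl : n = 0 := by omega
    exact hx (Subsingleton.elim _ _)
  have hθ : ‖‖x‖⁻¹ • x‖ = 1 := norm_smul_inv_norm hx
  have hxθ : ‖x‖ • ‖x‖⁻¹ • x = x := smul_inv_smul₀ (norm_ne_zero_iff.2 hx) x
  have key := hC.volume_add_segment_smul hCc hθ (norm_nonneg x)
  rw [hxθ, finrank_euclideanSpace_fin, Measure.euclideanHausdorffMeasure_def] at key
  have hdim : ((n - 1 : ℕ) : ℝ) = (n : ℝ) - 1 := by rw [Nat.cast_sub hn, Nat.cast_one]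
  rw [key, ENNReal.add_sub_cancel_left hCc.measure_lt_top.ne, shadowNorm, ← hdim]
  have hc : (Measure.addHaarScalarFactor (volume : Measure (EuclideanSpace ℝ (Fin (n - 1))))
      μH[(n - 1 : ℕ)] : ℝ) ≠ 0 :=
    NNReal.coe_ne_zero.2 (Measure.addHaarScalarFactor_volume_hausdorffMeasure_ne_zero _)
  simp only [Measure.smul_apply, ENNReal.smul_def, smul_eq_mul, ENNReal.toReal_mul,
    ENNReal.coe_toReal, ENNReal.toReal_ofReal (norm_nonneg x)]
  rw [mul_left_comm, mul_div_cancel_left₀ _ hc]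

theorem shadowNorm_image_apply {n : ℕ} {C : Set (EuclideanSpace ℝ (Fin n))} (hC : Convex ℝ C)
    (hCc : IsCompact C) {T : EuclideanSpace ℝ (Fin n) →ₗ[ℝ] EuclideanSpace ℝ (Fin n)}
    (hT : |LinearMap.det T| = 1) (y : EuclideanSpace ℝ (Fin n)) :
    shadowNorm n (T '' C) (T y) = shadowNorm n C y := by
  have hvol (S : Set (EuclideanSpace ℝ (Fin n))) : volume (T '' S) = volume S := by
    simp [Measure.addHaar_image_linearMap, hT]
  have hseg : T '' segment ℝ 0 y = segment ℝ 0 (T y) := by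
    simpa using image_segment ℝ T.toAffineMap 0 y
  rw [shadowNorm_eq_toReal_volume_add_segment (hC.linear_image T)
      (hCc.image T.continuous_of_finiteDimensional), ← hseg, ← image_add, hvol, hvol,
    shadowNorm_eq_toReal_volume_add_segment hC hCc]

theorem stmt_12_general (n : ℕ) (C : Set (EuclideanSpace ℝ (Fin n)))
    (hC : Convex ℝ C) (hCc : IsCompact C)
    (T : EuclideanSpace ℝ (Fin n) →ₗ[ℝ] EuclideanSpace ℝ (Fin n))
    (hT : LinearMap.det T = 1) :
    piStar n (T '' C) = T '' piStar n C := by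
  have hbij : Function.Bijective T :=
    (Module.End.isUnit_iff T).1 ((LinearMap.isUnit_iff_isUnit_det T).2 (hT ▸ isUnit_one))
  ext x
  obtain ⟨y, rfl⟩ := hbij.2 x
  simp only [piStar, mem_ofPred_eq, hbij.1.mem_set_image,
    shadowNorm_image_apply hC hCc (by rw [hT, abs_one]) y]

/-- Petty's intertwining property: if `T` is a linear operator on `ℝⁿ` of determinant `1`
and `C` is a convex body, then `Π*(T C) = T (Π*(C))`. -/
theorem stmt_12 (n : ℕ) (C : Set (EuclideanSpace ℝ (Fin n)))
    (hC : Convex ℝ C) (hCc : IsCompact C) (hCi : (interior C).Nonempty)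
    (T : EuclideanSpace ℝ (Fin n) →ₗ[ℝ] EuclideanSpace ℝ (Fin n))
    (hT : LinearMap.det T = 1) :
    piStar n (T '' C) = T '' piStar n C :=
  stmt_12_general n C hC hCc T hT
end
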